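/- arXiv:2102.01438 — 4 statements merged into one kernel-verified Lean document; each statement's English description precedes it below -/
import Mathlib

section
/- Let P and Q be idempotent complex d×d matrices and let Γ be an invertible complex d×d matrix. If P·Γ·Qᵀ = Γ, then P = 1 and Q = 1 (the identity matrix). This is the core of the proof of the Quantum Holism theorem: the only product property leaving the double-ket vector |Γ⟩⟩ of an invertible Γ fixed is the trivial one. -/
open Matrix

/-- Core of the Quantum Holism theorem: if `P`, `Q` are idempotent, `Γ` is invertible,
and `P·Γ·Qᵀ = Γ`, then `P = 1` and `Q = 1`. -/
theorem idempotent_sandwich_fix_invertible (d : ℕ) (P Q Γ : Matrix (Fin d) (Fin d) ℂ)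
    (hP : P * P = P) (hQ : Q * Q = Q) (hΓ : IsUnit Γ) (h : P * Γ * Qᵀ = Γ) :
    P = 1 ∧ Q = 1 := by
  obtain ⟨u, rfl⟩ := hΓ
  set v : Matrix (Fin d) (Fin d) ℂ := ↑u⁻¹ with hv
  have huv : (u : Matrix (Fin d) (Fin d) ℂ) * v = 1 := u.mul_inv
  have hvu : v * (u : Matrix (Fin d) (Fin d) ℂ) = 1 := u.inv_mul
  have hPΓ : P * (u : Matrix (Fin d) (Fin d) ℂ) = u := by
    conv_lhs => rw [← h]
    rw [← mul_assoc, ← mul_assoc, hP, h]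
  have hP1 : P = 1 := by
    have : P * (u : Matrix (Fin d) (Fin d) ℂ) * v = (u : Matrix (Fin d) (Fin d) ℂ) * v := by
      rw [hPΓ]
    rwa [mul_assoc, huv, mul_one] at this
  have hΓQ : (u : Matrix (Fin d) (Fin d) ℂ) * Qᵀ = u := by
    have := h; rw [hP1] at this; simpa using this
  have hQt : Qᵀ = 1 := by
    have : v * ((u : Matrix (Fin d) (Fin d) ℂ) * Qᵀ) = v * u := by rw [hΓQ]
    rwa [← mul_assoc, hvu, one_mul] at this
  refine ⟨hP1, ?_⟩
  calc Q = Qᵀᵀ := (transpose_transpose Q).symm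
    _ = (1 : Matrix (Fin d) (Fin d) ℂ)ᵀ := by rw [hQt]
    _ = 1 := transpose_one
end

section
/- Let P and Q be orthogonal projectors on ℂ^d (Hermitian idempotent d×d complex matrices) and let Γ be a nonzero complex d×d matrix. Then the Kronecker product P ⊗ Q commutes with the rank-one matrix vec(Γ)·vec(Γ)ᴴ if and only if P·Γ·Qᵀ = Γ or P·Γ·Qᵀ = 0. -/
open Matrix
open scoped Kronecker

/-! `K = P ⊗ Q` is again a star projection. If `K` commutes with `v v*`, where `v = vec Γ ≠ 0`,
comparing the two products entrywise gives `K v = c • v`; applying `K` once more gives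
`c • K v = K v`, so `c = 1` or `K v = 0`. It remains to note that `K (vec Γ) = vec (P Γ Qᵀ)`. -/

/-- Vectorization of a matrix: `vec C (i,j) = C i j`. -/
def vec {m n : ℕ} (C : Matrix (Fin m) (Fin n) ℂ) : Fin m × Fin n → ℂ :=
  fun p => C p.1 p.2

theorem exists_smul_eq_of_vecMulVec_eq {m n R : Type*} [Field R] {v w : m → R} {x y : n → R}
    (h : vecMulVec w x = vecMulVec v y) (hx : x ≠ 0) : ∃ c : R, w = c • v := by
  obtain ⟨j, hj⟩ := Function.ne_iff.mp hx
  refine ⟨y j / x j, funext fun i => ?_⟩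
  have hij : w i * x j = v i * y j := by simpa only [vecMulVec_apply] using congr_fun₂ h i j
  rw [Pi.smul_apply, smul_eq_mul, div_mul_eq_mul_div, eq_div_iff hj]
  linear_combination hij

theorem IsStarProjection.kronecker {m n R : Type*} [Fintype m] [DecidableEq m] [Fintype n]
    [DecidableEq n] [CommSemiring R] [StarRing R] {P : Matrix m m R} {Q : Matrix n n R}
    (hP : IsStarProjection P) (hQ : IsStarProjection Q) : IsStarProjection (P ⊗ₖ Q) where
  isIdempotentElem := by
    rw [IsIdempotentElem, ← mul_kronecker_mul, hP.isIdempotentElem.eq, hQ.isIdempotentElem.eq]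
  isSelfAdjoint := by
    rw [IsSelfAdjoint, star_eq_conjTranspose, conjTranspose_kronecker, ← star_eq_conjTranspose,
      ← star_eq_conjTranspose, hP.isSelfAdjoint.star_eq, hQ.isSelfAdjoint.star_eq]

theorem IsStarProjection.commute_vecMulVec_star_self_iff {n R : Type*} [Fintype n]
    [DecidableEq n] [Field R] [StarRing R] {K : Matrix n n R} (hK : IsStarProjection K)
    {v : n → R} (hv : v ≠ 0) :
    Commute K (vecMulVec v (star v)) ↔ K *ᵥ v = v ∨ K *ᵥ v = 0 := by
  have hKstar : star v ᵥ* K = star (K *ᵥ v) := by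
    rw [star_mulVec, ← star_eq_conjTranspose, hK.isSelfAdjoint.star_eq]
  rw [commute_iff_eq, mul_vecMulVec, vecMulVec_mul, hKstar]
  constructor
  · intro h
    obtain ⟨c, hc⟩ := exists_smul_eq_of_vecMulVec_eq h (star_ne_zero.mpr hv)
    have hfixed : c • (K *ᵥ v) = K *ᵥ v := by
      rw [← mulVec_smul, ← hc, mulVec_mulVec, hK.isIdempotentElem.eq]
    have hzero : (c - 1) • (K *ᵥ v) = 0 := by rw [sub_smul, hfixed, one_smul, sub_self]
    rcases smul_eq_zero.mp hzero with hc1 | hKv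
    · left
      rw [hc, sub_eq_zero.mp hc1, one_smul]
    · exact Or.inr hKv
  · rintro (hKv | hKv) <;> simp only [hKv, star_zero, zero_vecMulVec, vecMulVec_zero]

theorem vec_eq_vec_transpose {m n : ℕ} (C : Matrix (Fin m) (Fin n) ℂ) :
    _root_.vec C = Matrix.vec Cᵀ :=
  rfl

theorem kronecker_mulVec_vec_eq_vec_mul_mul_transpose {m m' n n' : ℕ}
    (P : Matrix (Fin m) (Fin m') ℂ) (Q : Matrix (Fin n) (Fin n') ℂ)
    (Γ : Matrix (Fin m') (Fin n') ℂ) :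
    (P ⊗ₖ Q) *ᵥ _root_.vec Γ = _root_.vec (P * Γ * Qᵀ) := by
  rw [vec_eq_vec_transpose, vec_eq_vec_transpose, Matrix.kronecker_mulVec_vec, transpose_mul,
    transpose_mul, transpose_transpose, Matrix.mul_assoc]

/-- For orthogonal projectors `P`, `Q` and a nonzero `Γ`, the product property `P ⊗ Q`
commutes with the whole-system rank-one property `vec(Γ)·vec(Γ)ᴴ` iff
`P·Γ·Qᵀ = Γ` or `P·Γ·Qᵀ = 0`. -/
theorem kronecker_commutes_with_outer_iff (d : ℕ) (P Q Γ : Matrix (Fin d) (Fin d) ℂ)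
    (hP1 : Pᴴ = P) (hP2 : P * P = P) (hQ1 : Qᴴ = Q) (hQ2 : Q * Q = Q)
    (hΓ : Γ ≠ 0) :
    Commute (P ⊗ₖ Q) (vecMulVec (_root_.vec Γ) (star (_root_.vec Γ))) ↔
      P * Γ * Qᵀ = Γ ∨ P * Γ * Qᵀ = 0 := by
  have hPQ : IsStarProjection (P ⊗ₖ Q) :=
    IsStarProjection.kronecker ⟨hP2, hP1⟩ ⟨hQ2, hQ1⟩
  have hvec : _root_.vec Γ ≠ 0 := by
    rwa [vec_eq_vec_transpose, Ne, Matrix.vec_eq_zero_iff, transpose_eq_zero]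
  rw [hPQ.commute_vecMulVec_star_self_iff hvec, kronecker_mulVec_vec_eq_vec_mul_mul_transpose,
    vec_eq_vec_transpose, vec_eq_vec_transpose, Matrix.vec_inj, transpose_inj,
    Matrix.vec_eq_zero_iff, transpose_eq_zero]
end

section
/- Quantum Holism theorem (part–whole incompatibility): let Γ be an invertible complex d×d matrix, and let P, Q be orthogonal projectors on ℂ^d with at least one of P, Q nontrivial (different from 0 and from the identity). If the product projector P ⊗ Q commutes with the whole-system property vec(Γ)·vec(Γ)ᴴ, then P·Γ·Qᵀ = 0, i.e., (P ⊗ Q)·vec(Γ) = 0, so the two properties are mutually exclusive. In particular, no nontrivial property of the parts P ⊗ Q can leave vec(Γ) invariant: the property vec(Γ)·vec(Γ)ᴴ of the whole is incompatible with every nontrivial property of the parts except mutually exclusive ones. -/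
/-!
`P ⊗ Q` is an idempotent commuting with the rank-one projector onto `vec Γ`, so it maps `vec Γ`
to a multiple `μ • vec Γ` with `μ² = μ`. If `μ = 0` the properties are mutually exclusive. If
`μ = 1` then `P Γ Qᵀ = Γ`; since `Γ` is invertible this forces `P` and `Q` to be invertible
idempotents, i.e. `P = Q = 1`, contradicting nontriviality.
-/

open Matrix
open scoped Kronecker

section RankOne

variable {K n : Type*} [Field K] [Fintype n]

theorem exists_mulVec_eq_smul_of_commute_vecMulVec {R : Matrix n n K} {v w : n → K}
    (hcomm : Commute R (vecMulVec v w)) (hwv : w ⬝ᵥ v ≠ 0) :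
    ∃ μ : K, R *ᵥ v = μ • v := by
  refine ⟨(w ⬝ᵥ R *ᵥ v) / (w ⬝ᵥ v), ?_⟩
  have h := congrArg (· *ᵥ v) hcomm.eq
  simp only [← mulVec_mulVec, vecMulVec_mulVec, op_smul_eq_smul, mulVec_smul] at h
  rw [div_eq_mul_inv, mul_comm, ← smul_smul, ← h, smul_smul, inv_mul_cancel₀ hwv, one_smul]

theorem eigenvalue_eq_zero_or_one_of_isIdempotentElem {R : Matrix n n K} {v : n → K} {μ : K}
    (hR : IsIdempotentElem R) (hv : v ≠ 0) (hRv : R *ᵥ v = μ • v) : μ = 0 ∨ μ = 1 := by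
  have h : (μ * μ) • v = μ • v := by
    rw [← smul_smul, ← hRv, ← mulVec_smul, ← hRv, mulVec_mulVec, hR.eq]
  exact IsIdempotentElem.iff_eq_zero_or_one.mp (smul_left_injective K hv h)

theorem mulVec_eq_zero_or_self_of_commute_vecMulVec {R : Matrix n n K} {v w : n → K}
    (hR : IsIdempotentElem R) (hcomm : Commute R (vecMulVec v w)) (hwv : w ⬝ᵥ v ≠ 0) :
    R *ᵥ v = 0 ∨ R *ᵥ v = v := by
  obtain ⟨μ, hRv⟩ := exists_mulVec_eq_smul_of_commute_vecMulVec hcomm hwv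
  have hv : v ≠ 0 := by rintro rfl; exact hwv (dotProduct_zero w)
  rcases eigenvalue_eq_zero_or_one_of_isIdempotentElem hR hv hRv with rfl | rfl
  · exact .inl (by rw [hRv, zero_smul])
  · exact .inr (by rw [hRv, one_smul])

end RankOne

theorem eq_one_of_isIdempotentElem_of_mul_mul_transpose_eq {R n : Type*} [CommRing R]
    [Fintype n] [DecidableEq n] {P Q Γ : Matrix n n R} (hP : IsIdempotentElem P)
    (hQ : IsIdempotentElem Q) (hΓ : IsUnit Γ) (h : P * Γ * Qᵀ = Γ) : P = 1 ∧ Q = 1 := by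
  have hdet : IsUnit (P.det * Γ.det * Q.det) := by
    rw [← det_transpose Q, ← det_mul, ← det_mul, h]
    exact (isUnit_iff_isUnit_det Γ).mp hΓ
  obtain ⟨⟨hPdet, -⟩, hQdet⟩ := IsUnit.mul_iff.mp hdet |>.imp_left IsUnit.mul_iff.mp
  exact ⟨(IsIdempotentElem.iff_eq_one_of_isUnit ((isUnit_iff_isUnit_det P).mpr hPdet)).mp hP,
    (IsIdempotentElem.iff_eq_one_of_isUnit ((isUnit_iff_isUnit_det Q).mpr hQdet)).mp hQ⟩

theorem vec_injective {m n : ℕ} :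
    Function.Injective (_root_.vec : Matrix (Fin m) (Fin n) ℂ → Fin m × Fin n → ℂ) :=
  fun _ _ h => Matrix.ext fun i j => congrFun h (i, j)

theorem vec_mul_mul_transpose {k l m n : ℕ} (A : Matrix (Fin k) (Fin m) ℂ)
    (B : Matrix (Fin l) (Fin n) ℂ) (C : Matrix (Fin m) (Fin n) ℂ) :
    _root_.vec (A * C * Bᵀ) = (A ⊗ₖ B) *ᵥ _root_.vec C := by
  rw [vec_eq_vec_transpose, vec_eq_vec_transpose, kronecker_mulVec_vec, transpose_mul,
    transpose_mul, transpose_transpose, Matrix.mul_assoc]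

open scoped ComplexOrder

theorem quantum_holism_general (d : ℕ) (P Q Γ : Matrix (Fin d) (Fin d) ℂ)
    (hP2 : P * P = P) (hQ2 : Q * Q = Q)
    (hΓ : IsUnit Γ)
    (hnontriv : (P ≠ 0 ∧ P ≠ 1) ∨ (Q ≠ 0 ∧ Q ≠ 1))
    (hcomm : Commute (P ⊗ₖ Q) (vecMulVec (_root_.vec Γ) (star (_root_.vec Γ)))) :
    P * Γ * Qᵀ = 0 ∧ (P ⊗ₖ Q) *ᵥ _root_.vec Γ = 0 := by
  by_cases hΓ0 : Γ = 0
  · subst hΓ0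
    exact ⟨by simp, mulVec_zero _⟩
  have hv : _root_.vec Γ ≠ 0 := fun h => hΓ0 (vec_injective h)
  have hPQ : IsIdempotentElem (P ⊗ₖ Q) := by
    rw [IsIdempotentElem, ← mul_kronecker_mul, hP2, hQ2]
  rcases mulVec_eq_zero_or_self_of_commute_vecMulVec hPQ hcomm
      (dotProduct_star_self_eq_zero.not.mpr hv) with h0 | h1
  · exact ⟨vec_injective (by rw [vec_mul_mul_transpose, h0]; rfl), h0⟩
  · obtain ⟨rfl, rfl⟩ := eq_one_of_isIdempotentElem_of_mul_mul_transpose_eq hP2 hQ2 hΓ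
      (vec_injective (by rw [vec_mul_mul_transpose, h1]))
    simp at hnontriv

/-- Quantum Holism theorem (part–whole incompatibility): for invertible `Γ` and
orthogonal projectors `P`, `Q` with at least one of them nontrivial, if `P ⊗ Q`
commutes with `vec(Γ)·vec(Γ)ᴴ`, then `P·Γ·Qᵀ = 0`, i.e. `(P ⊗ Q)·vec(Γ) = 0`:
the two properties are mutually exclusive. -/
theorem quantum_holism (d : ℕ) (P Q Γ : Matrix (Fin d) (Fin d) ℂ)
    (hP1 : Pᴴ = P) (hP2 : P * P = P) (hQ1 : Qᴴ = Q) (hQ2 : Q * Q = Q)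
    (hΓ : IsUnit Γ)
    (hnontriv : (P ≠ 0 ∧ P ≠ 1) ∨ (Q ≠ 0 ∧ Q ≠ 1))
    (hcomm : Commute (P ⊗ₖ Q) (vecMulVec (_root_.vec Γ) (star (_root_.vec Γ)))) :
    P * Γ * Qᵀ = 0 ∧ (P ⊗ₖ Q) *ᵥ _root_.vec Γ = 0 :=
  quantum_holism_general d P Q Γ hP2 hQ2 hΓ hnontriv hcomm
end

section
/- Let P be a Hermitian complex d×d matrix. The linear map T : X ↦ P·X·P on d×d complex matrices is idempotent under composition (T∘T = T, i.e., P·(P·X·P)·P = P·X·P for every X) if and only if P² = P or P² = −P. In particular, every orthogonal projector P yields a repeatable transformation X ↦ P·X·P. -/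
open Matrix

/-!
Testing the identity `P² X P² = P X P` on the matrix units `X = E_{bi}` gives
`(P²)_{ab} (P²)_{ij} = P_{ab} P_{ij}` for all indices, i.e. `P² ⊗ P² = P ⊗ P`.
Over a ring without zero divisors two rank-one tensors `f ⊗ f` and `g ⊗ g` agree only
when `f = ± g`: comparing at an entry where `g` does not vanish fixes the sign.
-/

theorem eq_or_eq_neg_of_forall_mul_eq_mul {ι R : Type*} [CommRing R] [NoZeroDivisors R]
    {f g : ι → R} (h : ∀ x y, f x * f y = g x * g y) : f = g ∨ f = -g := by
  by_cases hg : g = 0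
  · left
    funext x
    simpa [hg] using h x x
  obtain ⟨y, hy⟩ : ∃ y, g y ≠ 0 := by simpa [funext_iff] using hg
  rcases mul_self_eq_mul_self_iff.mp (h y y) with hfy | hfy
  · left
    funext x
    exact mul_right_cancel₀ hy (by linear_combination h x y - f x * hfy)
  · right
    funext x
    exact mul_right_cancel₀ hy (by simp only [Pi.neg_apply]; linear_combination f x * hfy - h x y)

namespace Matrix

variable {l m n o R : Type*}

theorem mul_single_mul_apply [Fintype m] [Fintype n] [DecidableEq m] [DecidableEq n]
    [NonUnitalNonAssocSemiring R] (A : Matrix l m R) (B : Matrix n o R)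
    (b : m) (i : n) (c : R) (a : l) (j : o) :
    (A * single b i c * B) a j = A a b * c * B i j := by
  rw [mul_apply, Finset.sum_eq_single i]
  · simp
  · intro k _ hk
    rw [mul_single_apply_of_ne _ _ _ _ _ hk, zero_mul]
  · simp

theorem eq_or_eq_neg_of_forall_mul_mul_eq [Fintype m] [Fintype n] [DecidableEq m]
    [DecidableEq n] [CommRing R] [NoZeroDivisors R] {A B : Matrix m n R}
    (h : ∀ X : Matrix n m R, A * X * A = B * X * B) : A = B ∨ A = -B := by
  have hentry : ∀ p q : m × n, A p.1 p.2 * A q.1 q.2 = B p.1 p.2 * B q.1 q.2 := by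
    rintro ⟨a, b⟩ ⟨i, j⟩
    simpa [mul_single_mul_apply] using congrFun₂ (h (single b i 1)) a j
  rcases eq_or_eq_neg_of_forall_mul_eq_mul hentry with hAB | hAB
  · exact .inl (ext fun a b => congrFun hAB (a, b))
  · exact .inr (ext fun a b => congrFun hAB (a, b))

theorem forall_mul_mul_eq_iff [Fintype m] [Fintype n] [DecidableEq m] [DecidableEq n]
    [CommRing R] [NoZeroDivisors R] {A B : Matrix m n R} :
    (∀ X : Matrix n m R, A * X * A = B * X * B) ↔ A = B ∨ A = -B := by
  refine ⟨eq_or_eq_neg_of_forall_mul_mul_eq, ?_⟩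
  rintro (rfl | rfl) X <;> simp

end Matrix

theorem sandwich_repeatable_iff_general (d : ℕ) (P : Matrix (Fin d) (Fin d) ℂ) :
    (∀ X : Matrix (Fin d) (Fin d) ℂ, P * (P * X * P) * P = P * X * P) ↔
      (P * P = P ∨ P * P = -P) := by
  have hassoc : ∀ X : Matrix (Fin d) (Fin d) ℂ, P * (P * X * P) * P = P * P * X * (P * P) := by
    intro X
    simp only [mul_assoc]
  simp only [hassoc]
  exact forall_mul_mul_eq_iff

/-- For Hermitian `P`, the transformation `X ↦ P·X·P` is repeatable
(`P·(P·X·P)·P = P·X·P` for every `X`) iff `P² = P` or `P² = −P`.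
In particular every orthogonal projector yields a repeatable transformation. -/
theorem sandwich_repeatable_iff (d : ℕ) (P : Matrix (Fin d) (Fin d) ℂ)
    (hP : Pᴴ = P) :
    (∀ X : Matrix (Fin d) (Fin d) ℂ, P * (P * X * P) * P = P * X * P) ↔
      (P * P = P ∨ P * P = -P) :=
  sandwich_repeatable_iff_general d P
end
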